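/- Let 𝕊 and 𝕋 be algebraic theories satisfying: (for 𝕊) terms equal to variable-free terms are variable-free; terms equal to a variable x have free variables ⊆ {x}; every positive-arity operation has a unit constant; and there is a binary term ⋄ with two-sided unit e_⋄. (For 𝕋) the same two variable conditions; a constant e_◦; and a binary term ◦ with two-sided unit e_◦. Then in any composite theory 𝕌 of 𝕊 and 𝕋, ⋄ distributes over ◦: ⋄(◦(y₁,y₂), x₀) =_𝕌 ◦(⋄(y₁,x₀), ⋄(y₂,x₀)) and ⋄(x₀, ◦(y₁,y₂)) =_𝕌 ◦(⋄(x₀,y₁), ⋄(x₀,y₂)). -/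

import Mathlib

/-! ### Algebraic theories, equational logic, and composite theories -/

structure Signature where
  Op : Type
  ar : Op → Nat

inductive Term (Sg : Signature) (V : Type) : Type
  | var : V → Term Sg V
  | op : (o : Sg.Op) → (Fin (Sg.ar o) → Term Sg V) → Term Sg V

def Term.subst {Sg : Signature} {V W : Type} : Term Sg V → (V → Term Sg W) → Term Sg W
  | .var v, f => f v
  | .op o ts, f => .op o (fun i => (ts i).subst f)

/-- Renaming of variables. -/
def Term.rename {Sg : Signature} {V W : Type} (f : V → W) (t : Term Sg V) : Term Sg W :=
  t.subst (fun v => .var (f v))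

/-- The set of free variables of a term. -/
def Term.fv {Sg : Signature} {V : Type} : Term Sg V → Set V
  | .var v => {v}
  | .op _ ts => ⋃ i, (ts i).fv

/-- An algebraic theory: a signature together with a set of equations (axioms),
given as pairs of terms over the variables ℕ. -/
structure Theory where
  sig : Signature
  Ax : Term sig Nat → Term sig Nat → Prop

/-- Provable equality in equational logic over a theory. -/
inductive Theory.Eq (T : Theory) : {V : Type} → Term T.sig V → Term T.sig V → Prop
  | ax {V : Type} {s t : Term T.sig Nat} (h : T.Ax s t) (f : Nat → Term T.sig V) :
      Theory.Eq T (s.subst f) (t.subst f)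
  | refl {V : Type} (t : Term T.sig V) : Theory.Eq T t t
  | symm {V : Type} {s t : Term T.sig V} : Theory.Eq T s t → Theory.Eq T t s
  | trans {V : Type} {s t u : Term T.sig V} :
      Theory.Eq T s t → Theory.Eq T t u → Theory.Eq T s u
  | congr {V : Type} (o : T.sig.Op) {ts ts' : Fin (T.sig.ar o) → Term T.sig V}
      (h : ∀ i, Theory.Eq T (ts i) (ts' i)) : Theory.Eq T (.op o ts) (.op o ts')
  | subst {V W : Type} {s t : Term T.sig V} (f : V → Term T.sig W) :
      Theory.Eq T s t → Theory.Eq T (s.subst f) (t.subst f)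

/-- Disjoint union of two signatures. -/
def Signature.sum (A B : Signature) : Signature := ⟨A.Op ⊕ B.Op, Sum.elim A.ar B.ar⟩

/-- Embedding of terms of the first theory into the sum signature. -/
def Term.inL {A B : Signature} {V : Type} : Term A V → Term (A.sum B) V
  | .var v => .var v
  | .op o ts => .op (Sum.inl o) (fun i => (ts i).inL)

/-- Embedding of terms of the second theory into the sum signature. -/
def Term.inR {A B : Signature} {V : Type} : Term B V → Term (A.sum B) V
  | .var v => .var v
  | .op o ts => .op (Sum.inr o) (fun i => (ts i).inR)

/-- A closed term, regarded as a term over any variable set. -/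
def Term.ofClosed {Sg : Signature} {V : Type} (t : Term Sg Empty) : Term Sg V :=
  t.rename (fun x => x.elim)

/-- A candidate composite theory of `S` and `T`: a theory over the disjoint
union of the two signatures. -/
structure Composite (S T : Theory) where
  Ax : Term (S.sig.sum T.sig) Nat → Term (S.sig.sum T.sig) Nat → Prop

def Composite.U {S T : Theory} (C : Composite S T) : Theory := ⟨S.sig.sum T.sig, C.Ax⟩

/-- A separated term: a `T`-term with `S`-terms substituted for its variables. -/
def sep {S T : Theory} {V : Type} (t : Term T.sig Nat) (σ : Nat → Term S.sig V) :
    Term (S.sig.sum T.sig) V :=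
  (Term.inR (A := S.sig) t).subst (fun n => Term.inL (σ n))

/-- `C` is a composite theory of `S` and `T` in the sense of Pirog–Staton:
it contains both theories, and satisfies separation and essential uniqueness. -/
structure IsComposite {S T : Theory} (C : Composite S T) : Prop where
  containsS : ∀ {V : Type} (s s' : Term S.sig V), S.Eq s s' → C.U.Eq s.inL s'.inL
  containsT : ∀ {V : Type} (t t' : Term T.sig V), T.Eq t t' → C.U.Eq t.inR t'.inR
  separation : ∀ {V : Type} (u : Term (S.sig.sum T.sig) V),
      ∃ (t : Term T.sig Nat) (σ : Nat → Term S.sig V), C.U.Eq u (sep t σ)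
  essUniq : ∀ {V : Type} (t t' : Term T.sig Nat) (σ σ' : Nat → Term S.sig V),
      C.U.Eq (sep t σ) (sep t' σ') →
      ∃ (Z : Type) (f g : Nat → Z),
        T.Eq (t.rename f) (t'.rename g) ∧
        (∀ i j, f i = f j ↔ S.Eq (σ i) (σ j)) ∧
        (∀ i j, g i = g j ↔ S.Eq (σ' i) (σ' j)) ∧
        (∀ i j, f i = g j ↔ S.Eq (σ i) (σ' j))

/-- Property: any term provably equal to a variable-free term is variable-free. -/
def VarFree0 (T : Theory) : Prop :=
  ∀ (V : Type) (t t' : Term T.sig V), t.fv = ∅ → T.Eq t t' → t'.fv = ∅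

/-- Property: any term provably equal to a variable `x` has free variables `⊆ {x}`. -/
def VarSingle (T : Theory) : Prop :=
  ∀ (V : Type) (x : V) (t : Term T.sig V), T.Eq t (.var x) → t.fv ⊆ {x}

/-- Property: every operation of positive arity has a unit constant. -/
def HasUnits (S : Theory) : Prop :=
  ∀ o : S.sig.Op, 1 ≤ S.sig.ar o →
    ∃ e : Term S.sig Empty, ∀ k : Fin (S.sig.ar o),
      S.Eq (.op o (fun i => if i = k then .var (0 : Nat) else e.ofClosed)) (.var 0)

/-- Application of a term with (at most) free variables `0, 1` to two arguments. -/
def app2 {Sg : Signature} {V : Type} (t : Term Sg Nat) (A B : Term Sg V) : Term Sg V :=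
  t.subst (fun n => if n = 0 then A else B)

/-!
Separate `u = d(c(x₀, x₁), x₂)` as a `𝕋`-term `t` applied to `𝕊`-terms `σ n`. Substituting the
unit `e_⋄` for `x₂` turns `u` into `c(x₀, x₁)`, so by essential uniqueness every `σ n` becomes one
of the variables `x₀`, `x₁`, and `t`, renamed along these two classes, is `𝕋`-equal to `c`.
Substituting instead the unit `e_◦` for `x₁` turns `u` into `d(x₀, x₂)`. An `𝕊`-operation with
`e_◦` as an argument collapses to `e_◦` (feed the unit of the operation into the other arguments and
apply essential uniqueness), so this substitution erases exactly the `σ n` of the class of `x₁`, and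
essential uniqueness identifies the others with `d(x₀, x₂)`; symmetrically for `x₀`. Hence `u` is
`t` with `d(xᵢ, x₂)` at the variables of class `i`, which is `c(d(x₀, x₂), d(x₁, x₂))`. The left
distributive law is the right one for `d` with its arguments swapped.
-/

namespace Term

variable {Sg : Signature} {V W X : Type}

@[simp]
theorem var_subst (v : V) (f : V → Term Sg W) : (var v).subst f = f v := rfl

theorem subst_subst (t : Term Sg V) (f : V → Term Sg W) (g : W → Term Sg X) :
    (t.subst f).subst g = t.subst fun v => (f v).subst g := by
  induction t with
  | var v => rfl
  | op o ts ih => exact congrArg (op o) (funext ih)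

theorem subst_var (t : Term Sg V) : t.subst var = t := by
  induction t with
  | var v => rfl
  | op o ts ih => exact congrArg (op o) (funext ih)

theorem subst_congr {t : Term Sg V} {f g : V → Term Sg W} (h : ∀ v ∈ t.fv, f v = g v) :
    t.subst f = t.subst g := by
  induction t with
  | var v => exact h v rfl
  | op o ts ih =>
    exact congrArg (op o) (funext fun i => ih i fun v hv => h v (Set.mem_iUnion_of_mem i hv))

theorem subst_eq_self {t : Term Sg V} {f : V → Term Sg V} (h : ∀ v ∈ t.fv, f v = var v) :
    t.subst f = t :=
  (subst_congr h).trans (subst_var t)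

theorem fv_subst (t : Term Sg V) (f : V → Term Sg W) :
    (t.subst f).fv = ⋃ v ∈ t.fv, (f v).fv := by
  induction t with
  | var v => simp [fv]
  | op o ts ih => simp only [subst, fv, ih, Set.biUnion_iUnion]

theorem mem_fv_subst {t : Term Sg V} {f : V → Term Sg W} {w : W} :
    w ∈ (t.subst f).fv ↔ ∃ v ∈ t.fv, w ∈ (f v).fv := by
  simp [fv_subst]

theorem fv_rename (f : V → W) (t : Term Sg V) : (t.rename f).fv = f '' t.fv := by
  ext w
  simp [rename, mem_fv_subst, fv, eq_comm]

theorem rename_rename (f : V → W) (g : W → X) (t : Term Sg V) :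
    (t.rename f).rename g = t.rename (g ∘ f) :=
  subst_subst _ _ _

theorem rename_eq_self {t : Term Sg V} {f : V → V} (h : ∀ v ∈ t.fv, f v = v) : t.rename f = t :=
  subst_eq_self fun v hv => congrArg var (h v hv)

theorem ofClosed_subst (t : Term Sg Empty) (f : V → Term Sg W) :
    (ofClosed t : Term Sg V).subst f = ofClosed t := by
  rw [ofClosed, rename, subst_subst]
  exact subst_congr fun v => v.elim

theorem ofClosed_rename (t : Term Sg Empty) (f : V → W) :
    (ofClosed t : Term Sg V).rename f = ofClosed t :=
  ofClosed_subst t _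

theorem fv_ofClosed (t : Term Sg Empty) : (ofClosed t : Term Sg V).fv = ∅ := by
  simp [ofClosed, fv_rename, Set.eq_empty_of_isEmpty t.fv]

section Sum

variable {A B : Signature}

theorem inL_subst (t : Term A V) (f : V → Term A W) :
    (t.subst f).inL (B := B) = t.inL.subst fun v => (f v).inL := by
  induction t with
  | var v => rfl
  | op o ts ih => exact congrArg (op _) (funext ih)

theorem inR_subst (t : Term B V) (f : V → Term B W) :
    (t.subst f).inR (A := A) = t.inR.subst fun v => (f v).inR := by
  induction t with
  | var v => rfl
  | op o ts ih => exact congrArg (op _) (funext ih)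

theorem fv_inL (t : Term A V) : (t.inL (B := B)).fv = t.fv := by
  induction t with
  | var v => rfl
  | op o ts ih => exact congrArg Set.iUnion (funext ih)

theorem fv_inR (t : Term B V) : (t.inR (A := A)).fv = t.fv := by
  induction t with
  | var v => rfl
  | op o ts ih => exact congrArg Set.iUnion (funext ih)

@[simp]
theorem inL_var (v : V) : (var v : Term A V).inL (B := B) = var v := rfl

@[simp]
theorem inR_var (v : V) : (var v : Term B V).inR (A := A) = var v := rfl

theorem inL_rename (f : V → W) (t : Term A V) : (t.rename f).inL (B := B) = t.inL.rename f :=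
  inL_subst _ _

@[simp]
theorem inL_ofClosed (t : Term A Empty) : (ofClosed t : Term A V).inL (B := B) = ofClosed t.inL :=
  inL_subst _ _

@[simp]
theorem inR_ofClosed (t : Term B Empty) : (ofClosed t : Term B V).inR (A := A) = ofClosed t.inR :=
  inR_subst _ _

end Sum

end Term

open Term

section App2

variable {Sg : Signature} {V W : Type}

theorem app2_subst (t : Term Sg ℕ) (a b : Term Sg V) (f : V → Term Sg W) :
    (app2 t a b).subst f = app2 t (a.subst f) (b.subst f) := by
  rw [app2, app2, subst_subst]
  exact subst_congr fun v _ => by split_ifs <;> rfl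

theorem inL_app2 {A B : Signature} (t : Term A ℕ) (a b : Term A V) :
    (app2 t a b).inL (B := B) = app2 t.inL a.inL b.inL := by
  rw [app2, app2, inL_subst]
  exact subst_congr fun v _ => apply_ite _ _ _ _

theorem inR_app2 {A B : Signature} (t : Term B ℕ) (a b : Term B V) :
    (app2 t a b).inR (A := A) = app2 t.inR a.inR b.inR := by
  rw [app2, app2, inR_subst]
  exact subst_congr fun v _ => apply_ite _ _ _ _

theorem app2_var_var {t : Term Sg ℕ} (ht : t.fv ⊆ {0, 1}) : app2 t (.var 0) (.var 1) = t := by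
  refine subst_eq_self fun v hv => ?_
  rcases ht hv with rfl | rfl <;> rfl

theorem app2_rename_swap {t : Term Sg ℕ} (ht : t.fv ⊆ {0, 1}) (a b : Term Sg V) :
    app2 (t.rename (Equiv.swap 0 1)) a b = app2 t b a := by
  rw [app2, app2, rename, subst_subst]
  refine subst_congr fun v hv => ?_
  rcases ht hv with rfl | rfl <;> simp

end App2

namespace Theory.Eq

variable {U : Theory} {V W : Type}

theorem rename {s t : Term U.sig V} (f : V → W) (h : U.Eq s t) : U.Eq (s.rename f) (t.rename f) :=
  h.subst _

theorem subst_congr {t : Term U.sig V} {f g : V → Term U.sig W}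
    (h : ∀ v ∈ t.fv, U.Eq (f v) (g v)) : U.Eq (t.subst f) (t.subst g) := by
  induction t with
  | var v => exact h v rfl
  | op o ts ih => exact .congr o fun i => ih i fun v hv => h v (Set.mem_iUnion_of_mem i hv)

theorem app2_congr (t : Term U.sig ℕ) {a a' b b' : Term U.sig V} (ha : U.Eq a a')
    (hb : U.Eq b b') : U.Eq (app2 t a b) (app2 t a' b') :=
  subst_congr fun v _ => by split_ifs <;> assumption

theorem app2_ofClosed_right {t : Term U.sig ℕ} {e : Term U.sig Empty}
    (h : U.Eq (app2 t (.var 0) (ofClosed e)) (.var 0)) (a : Term U.sig V) :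
    U.Eq (app2 t a (ofClosed e)) a := by
  simpa [app2_subst, ofClosed_subst] using h.subst fun _ => a

theorem app2_ofClosed_left {t : Term U.sig ℕ} {e : Term U.sig Empty}
    (h : U.Eq (app2 t (ofClosed e) (.var 0)) (.var 0)) (a : Term U.sig V) :
    U.Eq (app2 t (ofClosed e) a) a := by
  simpa [app2_subst, ofClosed_subst] using h.subst fun _ => a

end Theory.Eq

theorem VarSingle.var_injective {S : Theory} (hS : VarSingle S) {V : Type} {x y : V}
    (h : S.Eq (.var x) (.var y)) : x = y :=
  hS V y _ h rfl

theorem VarFree0.fv_eq_empty {T : Theory} (hT : VarFree0 T) {V : Type} {t : Term T.sig V}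
    {e : Term T.sig Empty} (h : T.Eq t (ofClosed e)) : t.fv = ∅ :=
  hT V _ _ (fv_ofClosed e) h.symm

section Sep

variable {S T : Theory} {V W : Type}

theorem sep_vars (t : Term T.sig ℕ) : sep (S := S) t .var = t.inR :=
  subst_var _

theorem sep_subst_inL (t : Term T.sig ℕ) (σ : ℕ → Term S.sig V) (τ : V → Term S.sig W) :
    (sep t σ).subst (fun v => (τ v).inL) = sep t fun n => (σ n).subst τ := by
  rw [sep, sep, subst_subst]
  simp only [inL_subst]

theorem sep_subst (t : Term T.sig ℕ) (κ : ℕ → Term T.sig ℕ) (σ : ℕ → Term S.sig V) :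
    sep (t.subst κ) σ = t.inR.subst fun n => sep (κ n) σ := by
  rw [sep, inR_subst, subst_subst]
  rfl

theorem sep_rename (t : Term T.sig ℕ) (r : ℕ → ℕ) (σ : ℕ → Term S.sig V) :
    sep (t.rename r) σ = sep t (σ ∘ r) :=
  sep_subst _ _ _

theorem sep_ofClosed (t : Term T.sig Empty) (σ : ℕ → Term S.sig V) :
    sep (ofClosed t) σ = ofClosed t.inR := by
  rw [sep, inR_ofClosed, ofClosed_subst]

theorem sep_eq_of_fv_eq_empty {t : Term T.sig ℕ} (ht : t.fv = ∅) (σ σ' : ℕ → Term S.sig V) :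
    sep t σ = sep t σ' :=
  subst_congr fun n hn => by simp [fv_inR, ht] at hn

theorem sep_eq_app2 {c : Term T.sig ℕ} (hc : c.fv ⊆ {0, 1}) (σ : ℕ → Term S.sig V) :
    sep c σ = app2 c.inR (σ 0).inL (σ 1).inL := by
  refine subst_congr fun n hn => ?_
  rcases hc (by rwa [fv_inR] at hn) with rfl | rfl <;> rfl

end Sep

-- lets `rw` and `simp` treat terms over `C.U.sig` as terms over `S.sig.sum T.sig`
attribute [reducible] Composite.U Signature.sum

namespace IsComposite

variable {S T : Theory} {C : Composite S T} {V W : Type}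

theorem sep_congr (hC : IsComposite C) (t : Term T.sig ℕ) {σ σ' : ℕ → Term S.sig V}
    (h : ∀ n ∈ t.fv, S.Eq (σ n) (σ' n)) : C.U.Eq (sep t σ) (sep t σ') :=
  Theory.Eq.subst_congr fun n hn => hC.containsS _ _ (h n (by rwa [fv_inR] at hn))

theorem sep_congr_left (hC : IsComposite C) {t t' : Term T.sig ℕ} (h : T.Eq t t')
    (σ : ℕ → Term S.sig V) : C.U.Eq (sep t σ) (sep t' σ) :=
  (hC.containsT _ _ h).subst _

theorem sep_eq_const (hC : IsComposite C) (hT0 : VarFree0 T) {t : Term T.sig ℕ}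
    {σ : ℕ → Term S.sig V} {e : Term T.sig Empty} (h : C.U.Eq (sep t σ) (ofClosed e.inR))
    (σ' : ℕ → Term S.sig V) : C.U.Eq (sep t σ') (ofClosed e.inR) := by
  obtain ⟨Z, f, g, hfg, -⟩ := hC.essUniq t (ofClosed e) σ σ (by rwa [sep_ofClosed])
  rw [ofClosed_rename] at hfg
  have ht : t.fv = ∅ := by simpa [fv_rename] using hT0.fv_eq_empty hfg
  rwa [sep_eq_of_fv_eq_empty ht σ' σ]

theorem op_inl_eq_unit (hC : IsComposite C) (hSu : HasUnits S) (hT0 : VarFree0 T)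
    (eT : Term T.sig Empty) {o : S.sig.Op} (k : Fin (S.sig.ar o))
    (X : Fin (S.sig.ar o) → Term (S.sig.sum T.sig) V) (hk : X k = ofClosed eT.inR) :
    C.U.Eq (.op (Sum.inl o) X) (ofClosed eT.inR) := by
  obtain ⟨e, he⟩ := hSu o k.pos
  let A : Term (S.sig.sum T.sig) (Fin (S.sig.ar o)) :=
    .op (Sum.inl o) fun (i : Fin (S.sig.ar o)) => if i = k then ofClosed eT.inR else .var i
  let ρ : Fin (S.sig.ar o) → Term S.sig (Fin (S.sig.ar o)) := fun _ => ofClosed e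
  obtain ⟨t, σ, hA⟩ := hC.separation A
  have hAρ : C.U.Eq (A.subst fun i => (ρ i).inL) (ofClosed eT.inR) := by
    have hAρ_eq : A.subst (fun i => (ρ i).inL) =
        (Term.inL (B := T.sig) (.op o fun i => if i = k then .var 0 else ofClosed e)).subst
          fun _ => ofClosed eT.inR := by
      refine congrArg (op _) (funext fun (i : Fin (S.sig.ar o)) => ?_)
      by_cases hik : i = k <;> simp [ρ, hik, ofClosed_subst]
    rw [hAρ_eq]
    exact (hC.containsS _ _ (he k)).subst _
  have hsep : C.U.Eq (sep t fun n => (σ n).subst ρ) (ofClosed eT.inR) := by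
    rw [← sep_subst_inL]
    exact (hA.subst _).symm.trans hAρ
  have hAX : A.subst X = .op (Sum.inl o) X := by
    refine congrArg (op _) (funext fun (i : Fin (S.sig.ar o)) => ?_)
    by_cases hik : i = k <;> simp [hik, hk, ofClosed_subst]
  simpa [hAX, ofClosed_subst] using (hA.trans (hC.sep_eq_const hT0 hsep σ)).subst X

theorem inL_subst_eq_unit (hC : IsComposite C) (hSu : HasUnits S) (hT0 : VarFree0 T)
    (eT : Term T.sig Empty) {s : Term S.sig V} {θ : V → Term (S.sig.sum T.sig) W} {x : V}
    (hx : x ∈ s.fv) (hθ : θ x = ofClosed eT.inR) :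
    C.U.Eq (s.inL.subst θ) (ofClosed eT.inR) := by
  induction s with
  | var v =>
    obtain rfl : x = v := hx
    exact hθ ▸ .refl _
  | op o ts ih =>
    obtain ⟨k, hk⟩ := Set.mem_iUnion.1 hx
    let X : Fin (S.sig.ar o) → Term (S.sig.sum T.sig) W := fun i => (ts i).inL.subst θ
    refine .trans (.congr _ fun (i : Fin (S.sig.ar o)) => ?_)
      (hC.op_inl_eq_unit hSu hT0 eT k (Function.update X k (ofClosed eT.inR)) (by simp))
    rcases eq_or_ne i k with rfl | hik
    · simpa using ih i hk
    · simpa [hik] using Theory.Eq.refl (T := C.U) (X i)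

open Classical in
theorem sep_subst_unit (hC : IsComposite C) (hSu : HasUnits S) (hT0 : VarFree0 T)
    (eT : Term T.sig Empty) [DecidableEq V] (t : Term T.sig ℕ) (σ : ℕ → Term S.sig V) (j : V) :
    C.U.Eq ((sep t σ).subst (Function.update var j (ofClosed eT.inR)))
      (sep (t.subst fun n => if j ∈ (σ n).fv then ofClosed eT else .var n) σ) := by
  rw [sep_subst, sep, subst_subst]
  refine Theory.Eq.subst_congr fun n _ => ?_
  by_cases hj : j ∈ (σ n).fv
  · simpa [hj, sep_ofClosed] using hC.inL_subst_eq_unit hSu hT0 eT hj (by simp)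
  · have hσ : (σ n).inL.subst (Function.update var j (ofClosed eT.inR)) = (σ n).inL :=
      subst_eq_self fun v hv =>
        Function.update_of_ne (ne_of_mem_of_not_mem ((fv_inL _).subset hv) hj) _ _
    simpa [hj, hσ] using .refl _

theorem eq_of_sep_eq_inL (hC : IsComposite C) (hT1 : VarSingle T) {t : Term T.sig ℕ}
    {σ : ℕ → Term S.sig V} {s : Term S.sig V} (h : C.U.Eq (sep t σ) s.inL) :
    ∀ n ∈ t.fv, S.Eq (σ n) s := by
  obtain ⟨Z, f, g, hfg, -, -, hσ⟩ := hC.essUniq t (.var 0) σ (fun _ => s) h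
  intro n hn
  exact (hσ n 0).1 (hT1 _ _ _ hfg (by rw [fv_rename]; exact ⟨n, hn, rfl⟩))

theorem eq_of_subst_unit_eq_inL (hC : IsComposite C) (hSu : HasUnits S) (hT0 : VarFree0 T)
    (hT1 : VarSingle T) (eT : Term T.sig Empty) [DecidableEq V] {u : Term (S.sig.sum T.sig) V}
    {t : Term T.sig ℕ} {σ : ℕ → Term S.sig V} (hu : C.U.Eq u (sep t σ)) (j : V)
    {s : Term S.sig V} (h : C.U.Eq (u.subst (Function.update var j (ofClosed eT.inR))) s.inL) :
    ∀ n ∈ t.fv, j ∉ (σ n).fv → S.Eq (σ n) s := by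
  intro n hn hj
  refine hC.eq_of_sep_eq_inL hT1
    ((hC.sep_subst_unit hSu hT0 eT t σ j).symm.trans ((hu.subst _).symm.trans h)) n ?_
  exact mem_fv_subst.2 ⟨n, hn, by simp [hj, fv]⟩

theorem exists_classes_of_sep_eq_inR (hC : IsComposite C) (hS1 : VarSingle S) (hT0 : VarFree0 T)
    {c : Term T.sig ℕ} (hc : c.fv ⊆ {0, 1}) {e : Term T.sig Empty}
    (hce : T.Eq (app2 c (ofClosed e) (ofClosed e)) (ofClosed e : Term T.sig ℕ))
    {t : Term T.sig ℕ} {σ : ℕ → Term S.sig ℕ} (h : C.U.Eq (sep t σ) c.inR) :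
    ∃ cls : ℕ → ℕ, (∀ n, cls n = 0 ∨ cls n = 1) ∧
      (∀ n ∈ t.fv, S.Eq (σ n) (.var (cls n))) ∧ T.Eq (t.rename cls) c := by
  obtain ⟨Z, f, g, hfg, -, hg, hfσ⟩ := hC.essUniq t c σ (fun n => .var n) (sep_vars c ▸ h)
  have hg01 : g 0 ≠ g 1 := fun h01 => zero_ne_one (hS1.var_injective ((hg 0 1).1 h01))
  have hcover : ∀ n ∈ t.fv, f n = g 0 ∨ f n = g 1 := by
    intro n hn
    by_contra! hne
    classical
    let κ : Z → Term T.sig ℕ := fun z => if z = g 0 ∨ z = g 1 then ofClosed e else .var 0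
    have hκ : T.Eq ((t.rename f).subst κ) (ofClosed e) := by
      refine (hfg.subst κ).trans ?_
      convert hce using 1
      rw [rename, subst_subst]
      refine subst_congr fun v hv => ?_
      rcases hc hv with rfl | rfl <;> simp [κ]
    have h0 : (0 : ℕ) ∈ ((t.rename f).subst κ).fv :=
      mem_fv_subst.2 ⟨f n, by rw [fv_rename]; exact ⟨n, hn, rfl⟩, by simp [κ, hne, fv]⟩
    simp [hT0.fv_eq_empty hκ] at h0
  classical
  let r : Z → ℕ := fun z => if z = g 0 then 0 else 1
  refine ⟨r ∘ f, fun n => by by_cases hn : f n = g 0 <;> simp [r, hn], fun n hn => ?_, ?_⟩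
  · refine (hfσ n _).1 ?_
    rcases hcover n hn with h | h <;> simp [r, h, hg01.symm]
  · have hcr : c.rename (r ∘ g) = c := rename_eq_self fun v hv => by
      rcases hc hv with rfl | rfl <;> simp [r, hg01.symm]
    simpa [rename_rename, hcr] using hfg.rename r

theorem distrib_right (hC : IsComposite C) (hS1 : VarSingle S) (hSu : HasUnits S)
    (d : Term S.sig ℕ) (eS : Term S.sig Empty)
    (hdu : S.Eq (app2 d (.var 0) (ofClosed eS)) (.var 0))
    (hT0 : VarFree0 T) (hT1 : VarSingle T)
    (c : Term T.sig ℕ) (hc : c.fv ⊆ {0, 1}) (eT : Term T.sig Empty)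
    (hcu1 : T.Eq (app2 c (.var 0) (ofClosed eT)) (.var 0))
    (hcu2 : T.Eq (app2 c (ofClosed eT) (.var 0)) (.var 0)) :
    C.U.Eq (app2 d.inL (app2 c.inR (.var 0) (.var 1)) (.var 2))
      (app2 c.inR (app2 d.inL (.var 0) (.var 2)) (app2 d.inL (.var 1) (.var 2))) := by
  obtain ⟨t, σ, hu⟩ :=
    hC.separation (app2 d.inL (app2 c.inR (.var 0) (.var 1)) (.var (2 : ℕ)))
  have hdU : C.U.Eq (app2 d.inL (.var 0) (ofClosed eS.inL)) (.var 0) := by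
    simpa [inL_app2] using hC.containsS _ _ hdu
  have hcR : C.U.Eq (app2 c.inR (.var 0) (ofClosed eT.inR)) (.var 0) := by
    simpa [inR_app2] using hC.containsT _ _ hcu1
  have hcL : C.U.Eq (app2 c.inR (ofClosed eT.inR) (.var 0)) (.var 0) := by
    simpa [inR_app2] using hC.containsT _ _ hcu2
  have hsep₂ :
      C.U.Eq (sep t fun n => (σ n).subst (Function.update .var 2 (ofClosed eS))) c.inR := by
    rw [← sep_subst_inL]
    refine (hu.subst _).symm.trans ?_
    rw [app2_subst, app2_subst]
    simpa [app2_subst, app2_var_var ((fv_inR c).trans_subset hc)] using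
      hdU.app2_ofClosed_right (c.inR : Term (S.sig.sum T.sig) ℕ)
  obtain ⟨cls, hcls, hσcls, htc⟩ :=
    hC.exists_classes_of_sep_eq_inR hS1 hT0 hc (hcu1.app2_ofClosed_right _) hsep₂
  have hfv : ∀ n ∈ t.fv, ∀ v ∈ (σ n).fv, v ≠ 2 → v = cls n := fun n hn v hv hv2 =>
    hS1 _ _ _ (hσcls n hn) (mem_fv_subst.2 ⟨v, hv, by simp [hv2, fv]⟩)
  have h0 : ∀ n ∈ t.fv, 1 ∉ (σ n).fv → S.Eq (σ n) (app2 d (.var 0) (.var 2)) :=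
    hC.eq_of_subst_unit_eq_inL hSu hT0 hT1 eT hu 1 (by
      simpa [app2_subst, inL_app2] using hcR.app2_congr d.inL (.refl (.var 2)))
  have h1 : ∀ n ∈ t.fv, 0 ∉ (σ n).fv → S.Eq (σ n) (app2 d (.var 1) (.var 2)) :=
    hC.eq_of_subst_unit_eq_inL hSu hT0 hT1 eT hu 0 (by
      simpa [app2_subst, inL_app2] using
        (hcL.app2_ofClosed_left (.var 1)).app2_congr d.inL (.refl (.var 2)))
  have hσ : ∀ n ∈ t.fv, S.Eq (σ n) (app2 d (.var (cls n)) (.var 2)) := by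
    intro n hn
    rcases hcls n with h | h <;> rw [h]
    · exact h0 n hn fun h1 => by simpa [h] using hfv n hn 1 h1 (by norm_num)
    · exact h1 n hn fun h0 => by simpa [h] using hfv n hn 0 h0 (by norm_num)
  have htc' := hC.sep_congr_left htc fun m => app2 d (.var m) (.var 2)
  rw [sep_rename, sep_eq_app2 hc, inL_app2, inL_app2] at htc'
  exact hu.trans ((hC.sep_congr t hσ).trans htc')

end IsComposite

theorem times_over_plus_general (S T : Theory)
    (hS1 : VarSingle S) (hSu : HasUnits S)
    (d : Term S.sig Nat) (hd : d.fv ⊆ {0, 1}) (eS : Term S.sig Empty)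
    (hdu1 : S.Eq (app2 d (.var 0) (Term.ofClosed eS)) (.var (0 : Nat)))
    (hdu2 : S.Eq (app2 d (Term.ofClosed eS) (.var 0)) (.var (0 : Nat)))
    (hT0 : VarFree0 T) (hT1 : VarSingle T)
    (c : Term T.sig Nat) (hc : c.fv ⊆ {0, 1}) (eT : Term T.sig Empty)
    (hcu1 : T.Eq (app2 c (.var 0) (Term.ofClosed eT)) (.var (0 : Nat)))
    (hcu2 : T.Eq (app2 c (Term.ofClosed eT) (.var 0)) (.var (0 : Nat)))
    (C : Composite S T) (hC : IsComposite C) :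
    C.U.Eq (app2 d.inL (app2 c.inR (.var 0) (.var 1)) (.var (2 : Nat)))
        (app2 c.inR (app2 d.inL (.var 0) (.var 2)) (app2 d.inL (.var 1) (.var 2))) ∧
    C.U.Eq (app2 d.inL (.var (2 : Nat)) (app2 c.inR (.var 0) (.var 1)))
        (app2 c.inR (app2 d.inL (.var 2) (.var 0)) (app2 d.inL (.var 2) (.var 1))) := by
  refine ⟨hC.distrib_right hS1 hSu d eS hdu1 hT0 hT1 c hc eT hcu1 hcu2, ?_⟩
  have hdL : (d.inL : Term (S.sig.sum T.sig) ℕ).fv ⊆ {0, 1} := (fv_inL d).trans_subset hd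
  have hdu' : S.Eq (app2 (d.rename (Equiv.swap 0 1)) (.var 0) (ofClosed eS)) (.var 0) := by
    rwa [app2_rename_swap hd]
  simpa only [inL_rename, app2_rename_swap hdL] using
    hC.distrib_right hS1 hSu _ eS hdu' hT0 hT1 c hc eT hcu1 hcu2

/-- **Times over plus theorem.** Let `𝕊` satisfy the two variable conditions, have a
unit constant for every positive-arity operation, and have a binary term `⋄` (here
`d`) with two-sided unit `e_⋄`; let `𝕋` satisfy the two variable conditions and have
a binary term `◦` (here `c`) with a two-sided unit constant `e_◦`. Then in any
composite theory `𝕌` of `𝕊` and `𝕋`, `⋄` distributes over `◦` on both sides. -/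
theorem times_over_plus (S T : Theory)
    (hS0 : VarFree0 S) (hS1 : VarSingle S) (hSu : HasUnits S)
    (d : Term S.sig Nat) (hd : d.fv ⊆ {0, 1}) (eS : Term S.sig Empty)
    (hdu1 : S.Eq (app2 d (.var 0) (Term.ofClosed eS)) (.var (0 : Nat)))
    (hdu2 : S.Eq (app2 d (Term.ofClosed eS) (.var 0)) (.var (0 : Nat)))
    (hT0 : VarFree0 T) (hT1 : VarSingle T)
    (c : Term T.sig Nat) (hc : c.fv ⊆ {0, 1}) (eT : Term T.sig Empty)
    (hcu1 : T.Eq (app2 c (.var 0) (Term.ofClosed eT)) (.var (0 : Nat)))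
    (hcu2 : T.Eq (app2 c (Term.ofClosed eT) (.var 0)) (.var (0 : Nat)))
    (C : Composite S T) (hC : IsComposite C) :
    C.U.Eq (app2 d.inL (app2 c.inR (.var 0) (.var 1)) (.var (2 : Nat)))
        (app2 c.inR (app2 d.inL (.var 0) (.var 2)) (app2 d.inL (.var 1) (.var 2))) ∧
    C.U.Eq (app2 d.inL (.var (2 : Nat)) (app2 c.inR (.var 0) (.var 1)))
        (app2 c.inR (app2 d.inL (.var 2) (.var 0)) (app2 d.inL (.var 2) (.var 1))) :=
  times_over_plus_general S T hS1 hSu d hd eS hdu1 hdu2 hT0 hT1 c hc eT hcu1 hcu2 C hC
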